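/- Let A, B, C be subspaces of E, let 𝒪 be an E-orbit in X²_{AB} and 𝒪' an E-orbit in X²_{BC} with p₂𝒪 = p₁𝒪', and let ε₁ ∈ (A∩B)*, ε'₁ ∈ (B∩C)*. Then in 𝓕 one has [𝒪]^{ε₁} ⋆ [𝒪']^{ε'₁} = N_{A,B,C} · ∑_ε [𝒪 • 𝒪']^ε, where N_{A,B,C} = |U_{ABC}| · |A∩B∩C| / (|A∩B| · |B∩C| · |A∩C|) and the sum is over all ε ∈ (A∩C)* such that the restrictions of ε, ε₁, ε'₁ to A∩B∩C sum to zero. -/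
import Mathlib


open scoped Classical

set_option linter.unusedSectionVars false

noncomputable section

namespace Lusztig

variable (E X : Type) [AddCommGroup E] [Module (ZMod 2) E] [Fintype E]
  [Fintype X] [AddAction E X]

/-- The stabilizer of `x` in `E`, as a subset of `E`. -/
def stabSet (x : X) : Set E := {e : E | e +ᵥ x = x}

/-- `X_A`: the set of points of `X` whose stabilizer in `E` equals `A`. -/
def XA (A : Submodule (ZMod 2) E) : Set X := {x : X | stabSet E X x = (A : Set E)}

/-- `X²_{AB} = X_A × X_B`. -/
def X2 (A B : Submodule (ZMod 2) E) : Set (X × X) := (XA E X A) ×ˢ (XA E X B)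

/-- The `E`-orbit of `x` in `X`. -/
def orb (x : X) : Set X := {y : X | ∃ e : E, y = e +ᵥ x}

/-- The `E`-orbit of `(x,y)` for the diagonal action of `E` on `X × X`. -/
def orb2 (x y : X) : Set (X × X) := {q : X × X | ∃ e : E, q = (e +ᵥ x, e +ᵥ y)}

/-- `O` is an `E`-orbit (for the diagonal action) contained in `X²_{AB}`. -/
def IsOrb2 (A B : Submodule (ZMod 2) E) (O : Set (X × X)) : Prop :=
  ∃ x y : X, x ∈ XA E X A ∧ y ∈ XA E X B ∧ O = orb2 E X x y

/-- The `E × B`-orbit of `(x,y)` for the action `(e,b)·(x,y) = (e+b+x, e+y)`. -/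
def orbEB (B : Submodule (ZMod 2) E) (x y : X) : Set (X × X) :=
  {q : X × X | ∃ e b : E, b ∈ B ∧ q = ((e + b) +ᵥ x, e +ᵥ y)}

/-- `M` is an `E × B`-orbit contained in `X²_{AC}` for the action
`(e,b)·(x,y) = (e+b+x, e+y)`. -/
def IsOrbEB (A B C : Submodule (ZMod 2) E) (M : Set (X × X)) : Prop :=
  ∃ x y : X, x ∈ XA E X A ∧ y ∈ XA E X C ∧ M = orbEB E X B x y

/-- Image under the first projection. -/
def p1 (S : Set (X × X)) : Set X := Prod.fst '' S

/-- Image under the second projection. -/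
def p2 (S : Set (X × X)) : Set X := Prod.snd '' S

/-- `U_{ABC} = {(a,b,c) ∈ A × B × C : a + b + c = 0}`. -/
def UABC (A B C : Submodule (ZMod 2) E) : Set (E × E × E) :=
  {t : E × E × E | t.1 ∈ A ∧ t.2.1 ∈ B ∧ t.2.2 ∈ C ∧ t.1 + t.2.1 + t.2.2 = 0}

/-- `X̄_C`: the set of `E`-orbits contained in `X_C`. -/
def barX (C : Submodule (ZMod 2) E) : Set (Set X) :=
  {s : Set X | ∃ x ∈ XA E X C, s = orb E X x}

/-- The dual (space of linear forms `P → ℤ/2`) of a subspace `P` of `E`. -/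
abbrev Dl (P : Submodule (ZMod 2) E) : Type := ↥P →ₗ[ZMod 2] ZMod 2

/-- Restriction of a linear form along an inclusion of subspaces. -/
def res {P Q : Submodule (ZMod 2) E} (h : P ≤ Q) (φ : Dl E Q) : Dl E P :=
  φ.comp (Submodule.inclusion h)

theorem leAB (A B C : Submodule (ZMod 2) E) : A ⊓ B ⊓ C ≤ A ⊓ B := inf_le_left
theorem leBC (A B C : Submodule (ZMod 2) E) : A ⊓ B ⊓ C ≤ B ⊓ C :=
  le_inf (inf_le_left.trans inf_le_right) inf_le_right
theorem leAC (A B C : Submodule (ZMod 2) E) : A ⊓ B ⊓ C ≤ A ⊓ C :=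
  le_inf (inf_le_left.trans inf_le_left) inf_le_right
theorem leBA (A B : Submodule (ZMod 2) E) : A ⊓ B ≤ B ⊓ A := le_inf inf_le_right inf_le_left

/-- The convolution product `𝓕_{AB} × 𝓕_{BC} → 𝓕_{AC}`. -/
def conv (A B C : Submodule (ZMod 2) E)
    (f₁ : (X × X) × Dl E (A ⊓ B) → ℂ) (f₂ : (X × X) × Dl E (B ⊓ C) → ℂ) :
    (X × X) × Dl E (A ⊓ C) → ℂ :=
  fun p =>
    (∑ᶠ (y : X) (_ : y ∈ XA E X B) (ε₁ : Dl E (A ⊓ B)) (ε₂ : Dl E (B ⊓ C))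
        (_ : res E (leAB E A B C) ε₁ + res E (leBC E A B C) ε₂
              + res E (leAC E A B C) p.2 = 0),
        f₁ ((p.1.1, y), ε₁) * f₂ ((y, p.1.2), ε₂)) *
      (Nat.card ↥(A ⊓ B ⊓ C) : ℂ) / (Nat.card ↥(A ⊓ C) : ℂ)

/-- The defining conditions for membership in `𝓕_{AB}`: supported on `X²_{AB}` and
invariant under the diagonal `E`-action. -/
def MemF (A B : Submodule (ZMod 2) E) (f : (X × X) × Dl E (A ⊓ B) → ℂ) : Prop :=
  (∀ p : (X × X) × Dl E (A ⊓ B), p.1 ∉ X2 E X A B → f p = 0) ∧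
  (∀ (e : E) (x y : X) (ε : Dl E (A ⊓ B)), f ((e +ᵥ x, e +ᵥ y), ε) = f ((x, y), ε))

/-- `𝓕_{AB}` as a subspace of the space of all functions. -/
def FAB (A B : Submodule (ZMod 2) E) : Submodule ℂ ((X × X) × Dl E (A ⊓ B) → ℂ) where
  carrier := {f | MemF E X A B f}
  add_mem' := by
    intro a b ha hb
    exact ⟨fun p hp => by simp [ha.1 p hp, hb.1 p hp],
      fun e x y ε => by simp [Pi.add_apply, ha.2 e x y ε, hb.2 e x y ε]⟩
  zero_mem' := ⟨fun p hp => rfl, fun e x y ε => rfl⟩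
  smul_mem' := by
    intro c a ha
    exact ⟨fun p hp => by simp [Pi.smul_apply, ha.1 p hp],
      fun e x y ε => by simp [Pi.smul_apply, ha.2 e x y ε]⟩

/-- `[Ξ]^ε`. -/
def br (A B : Submodule (ZMod 2) E) (Ξ : Set (X × X)) (ε : Dl E (A ⊓ B)) :
    (X × X) × Dl E (A ⊓ B) → ℂ :=
  fun p => if p.1 ∈ Ξ ∧ p.2 = ε then 1 else 0

/-- The ambient space of `𝓕 = ⊕_{A,B} 𝓕_{AB}` (all summands at once). -/
abbrev FF : Type := ∀ A B : Submodule (ZMod 2) E, (X × X) × Dl E (A ⊓ B) → ℂ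

/-- The embedding of the `(A,B)` summand into `𝓕`. -/
def emb (A B : Submodule (ZMod 2) E) (f : (X × X) × Dl E (A ⊓ B) → ℂ) : FF E X :=
  fun A' B' p =>
    if h : A = A' ∧ B = B' then f (p.1, cast (by rw [h.1, h.2]) p.2) else 0

/-- `𝓕` as a subspace of `FF`: componentwise supported on `X²_{AB}` and `E`-invariant. -/
def FFsub : Submodule ℂ (FF E X) where
  carrier := {g | ∀ A B, MemF E X A B (g A B)}
  add_mem' := by
    intro a b ha hb A B
    exact ⟨fun p hp => by simp [(ha A B).1 p hp, (hb A B).1 p hp],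
      fun e x y ε => by simp [(ha A B).2 e x y ε, (hb A B).2 e x y ε]⟩
  zero_mem' := fun A B => ⟨fun p hp => rfl, fun e x y ε => rfl⟩
  smul_mem' := by
    intro c a ha A B
    exact ⟨fun p hp => by simp [(ha A B).1 p hp],
      fun e x y ε => by simp [(ha A B).2 e x y ε]⟩

/-- The product on `𝓕` (zero between summands `𝓕_{AB}`, `𝓕_{B'C}` with `B ≠ B'`). -/
def mulFF (g h : FF E X) : FF E X :=
  fun A C => ∑ᶠ B : Submodule (ZMod 2) E, conv E X A B C (g A B) (h B C)

/-- The diagonal `Δ_A ⊆ X²_{AA}`. -/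
def diagSet (A : Submodule (ZMod 2) E) : Set (X × X) :=
  {q : X × X | q.1 ∈ XA E X A ∧ q.2 = q.1}

/-- The element `∑_A [Δ_A]^0` of `𝓕`. -/
def unitFF : FF E X :=
  ∑ᶠ A : Submodule (ZMod 2) E, emb E X A A (br E X A A (diagSet E X A) 0)

/-- The map `f ↦ f^#` on `𝓕`. -/
def shFF (g : FF E X) : FF E X :=
  fun A B p => g B A ((p.1.2, p.1.1), res E (leBA E B A) p.2)

/-- `𝒪 • 𝒪'`. -/
def bullet (O O' : Set (X × X)) : Set (X × X) :=
  {q : X × X | ∃ y : X, (q.1, y) ∈ O ∧ (y, q.2) ∈ O'}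

/-- `∑_{ε ∈ α̃} [𝓜]^ε ∈ 𝓕_{AC}`, where `α̃` is the fibre of
`(A∩C)* → (A∩B∩C)*` over `α`. -/
def bSum (A B C : Submodule (ZMod 2) E) (M : Set (X × X)) (α : Dl E (A ⊓ B ⊓ C)) :
    (X × X) × Dl E (A ⊓ C) → ℂ :=
  ∑ᶠ (ε : Dl E (A ⊓ C)) (_ : res E (leAC E A B C) ε = α), br E X A C M ε

/-- The set `𝓑_{oBC} ⊆ 𝓕` (embedded in `FF`). -/
def BoBC (A B C : Submodule (ZMod 2) E) (o : Set X) : Set (FF E X) :=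
  {g | ∃ (M : Set (X × X)) (α : Dl E (A ⊓ B ⊓ C)),
      IsOrbEB E X A B C M ∧ p1 X M = o ∧ g = emb E X A C (bSum E X A B C M α)}

/-- The set `𝓑_{oB} = ⊔_C 𝓑_{oBC}`. -/
def BoB (A B : Submodule (ZMod 2) E) (o : Set X) : Set (FF E X) :=
  ⋃ C : Submodule (ZMod 2) E, BoBC E X A B C o

/-- `[[oB]]`, the `ℂ`-span of `𝓑_{oB}`. -/
def ooB (A B : Submodule (ZMod 2) E) (o : Set X) : Submodule ℂ (FF E X) :=
  Submodule.span ℂ (BoB E X A B o)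


-- ===== auxiliary lemmas =====

lemma addself (e : E) : e + e = 0 := by
  have h := two_smul (ZMod 2) e
  rw [show (2 : ZMod 2) = 0 by decide, zero_smul] at h
  exact h.symm

lemma addcancel (u v : E) : u + (u + v) = v := by
  rw [← add_assoc, addself, zero_add]

lemma two_vadd (e : E) (x : X) : e +ᵥ (e +ᵥ x) = x := by
  rw [← add_vadd, addself, zero_vadd]

lemma vadd_cancel {e : E} {x y : X} (h : e +ᵥ x = e +ᵥ y) : x = y := by
  have h2 := congrArg (fun w => e +ᵥ w) h
  simpa [two_vadd] using h2

lemma mem_stab_iff {A : Submodule (ZMod 2) E} {x : X} (hx : x ∈ XA E X A) (e : E) :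
    e +ᵥ x = x ↔ e ∈ A := by
  have : e ∈ stabSet E X x ↔ e ∈ (A : Set E) := by rw [hx]
  exact this

lemma diff_mem {A : Submodule (ZMod 2) E} {w : X} (hw : w ∈ XA E X A) {g h : E}
    (hgh : g +ᵥ w = h +ᵥ w) : g + h ∈ A := by
  rw [← mem_stab_iff E X hw]
  rw [add_vadd, ← hgh, two_vadd]

lemma stabSet_vadd (e : E) (x : X) : stabSet E X (e +ᵥ x) = stabSet E X x := by
  ext f
  constructor <;> intro hf
  · have : f +ᵥ (e +ᵥ x) = e +ᵥ x := hf
    rw [vadd_comm] at this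
    show f +ᵥ x = x
    exact vadd_cancel E X this
  · show f +ᵥ (e +ᵥ x) = e +ᵥ x
    rw [vadd_comm]
    show e +ᵥ (f +ᵥ x) = e +ᵥ x
    rw [show f +ᵥ x = x from hf]

lemma XA_vadd {A : Submodule (ZMod 2) E} (e : E) {x : X} (hx : x ∈ XA E X A) :
    e +ᵥ x ∈ XA E X A := by
  show stabSet E X (e +ᵥ x) = (A : Set E)
  rw [stabSet_vadd]
  exact hx

lemma orb2_vadd (e : E) (x y : X) : orb2 E X (e +ᵥ x) (e +ᵥ y) = orb2 E X x y := by
  ext q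
  constructor
  · rintro ⟨f, rfl⟩
    exact ⟨f + e, by rw [add_vadd, add_vadd]⟩
  · rintro ⟨f, rfl⟩
    refine ⟨f + e, ?_⟩
    have h1 : (f + e) +ᵥ (e +ᵥ x) = f +ᵥ x := by
      rw [add_vadd, two_vadd]
    have h2 : (f + e) +ᵥ (e +ᵥ y) = f +ᵥ y := by
      rw [add_vadd, two_vadd]
    rw [h1, h2]

lemma snd_mem_XB {B : Submodule (ZMod 2) E} {x₀ y₀ : X} (hy₀ : y₀ ∈ XA E X B)
    {x y : X} (hxy : (x, y) ∈ orb2 E X x₀ y₀) : y ∈ XA E X B := by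
  obtain ⟨e, he⟩ := hxy
  have : y = e +ᵥ y₀ := congrArg Prod.snd he
  rw [this]
  exact XA_vadd E X e hy₀

instance DlFinite (P : Submodule (ZMod 2) E) : Finite (Dl E P) :=
  Finite.of_injective (fun f => (f : ↥P → ZMod 2)) DFunLike.coe_injective

-- ===== the counting lemma =====

lemma vadd_eq_of_diff {B : Submodule (ZMod 2) E} {w : X} (hw : w ∈ XA E X B)
    {g h : E} (hB : g + h ∈ B) : g +ᵥ w = h +ᵥ w := by
  have h1 : (g + h) +ᵥ w = w := (mem_stab_iff E X hw _).2 hB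
  have h2 := congrArg (fun t => h +ᵥ t) h1
  simp only [← add_vadd] at h2
  rwa [show h + (g + h) = g + (h + h) from by abel, addself, add_zero] at h2

lemma char2_cancel2 (u a b : E) : (u + a) + (u + b) = a + b := by
  rw [show (u + a) + (u + b) = (u + u) + (a + b) from by abel, addself, zero_add]

lemma char2_sum {a b c : E} (h : a + b + c = 0) : a + c = b := by
  have h2 : b + (a + b + c) = a + c := by
    rw [show b + (a + b + c) = (b + b) + (a + c) from by abel, addself, zero_add]
  rw [h, add_zero] at h2
  exact h2.symm

lemma count_key (A B C : Submodule (ZMod 2) E) (x₀ y₀ z₀ : X)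
    (hx₀ : x₀ ∈ XA E X A) (hy₀ : y₀ ∈ XA E X B) (hz₀ : z₀ ∈ XA E X C)
    (x z : X) (hxz : (x, z) ∈ bullet X (orb2 E X x₀ y₀) (orb2 E X y₀ z₀)) :
    Nat.card {y : X // (x, y) ∈ orb2 E X x₀ y₀ ∧ (y, z) ∈ orb2 E X y₀ z₀} *
      (Nat.card ↥(A ⊓ B) * Nat.card ↥(B ⊓ C)) = Nat.card ↥(UABC E A B C) := by
  obtain ⟨ys, hys1, hys2⟩ := hxz
  obtain ⟨es, hes⟩ := hys1
  obtain ⟨fs, hfs⟩ := hys2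
  have hesx : x = es +ᵥ x₀ := congrArg Prod.fst hes
  have hesy : ys = es +ᵥ y₀ := congrArg Prod.snd hes
  have hfsy : ys = fs +ᵥ y₀ := congrArg Prod.fst hfs
  have hfsz : z = fs +ᵥ z₀ := congrArg Prod.snd hfs
  set S := {y : X // (x, y) ∈ orb2 E X x₀ y₀ ∧ (y, z) ∈ orb2 E X y₀ z₀} with hSdef
  have hex1 : ∀ y : S, ∃ e : E, x = e +ᵥ x₀ ∧ y.1 = e +ᵥ y₀ := by
    rintro ⟨y, ⟨e, he⟩, -⟩
    exact ⟨e, congrArg Prod.fst he, congrArg Prod.snd he⟩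
  have hex2 : ∀ y : S, ∃ f : E, y.1 = f +ᵥ y₀ ∧ z = f +ᵥ z₀ := by
    rintro ⟨y, -, ⟨f, hf⟩⟩
    exact ⟨f, congrArg Prod.fst hf, congrArg Prod.snd hf⟩
  set a0 : X → E := fun w =>
    es + (if h : ∃ e : E, x = e +ᵥ x₀ ∧ w = e +ᵥ y₀ then h.choose else 0) with ha0def
  set c0 : X → E := fun w =>
    fs + (if h : ∃ f : E, w = f +ᵥ y₀ ∧ z = f +ᵥ z₀ then h.choose else 0) with hc0def
  have ha0eq : ∀ y : S, a0 y.1 = es + (hex1 y).choose := by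
    intro y
    rw [ha0def]
    simp only [dif_pos (hex1 y)]
  have hc0eq : ∀ y : S, c0 y.1 = fs + (hex2 y).choose := by
    intro y
    rw [hc0def]
    simp only [dif_pos (hex2 y)]
  have ha0A : ∀ y : S, a0 y.1 ∈ A := by
    intro y
    rw [ha0eq y]
    exact diff_mem E X hx₀ (hesx.symm.trans (hex1 y).choose_spec.1)
  have hc0C : ∀ y : S, c0 y.1 ∈ C := by
    intro y
    rw [hc0eq y]
    exact diff_mem E X hz₀ (hfsz.symm.trans (hex2 y).choose_spec.2)
  have ha0y : ∀ y : S, (es + a0 y.1) +ᵥ y₀ = y.1 := by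
    intro y
    rw [ha0eq y, addcancel]
    exact ((hex1 y).choose_spec.2).symm
  have hc0y : ∀ y : S, (fs + c0 y.1) +ᵥ y₀ = y.1 := by
    intro y
    rw [hc0eq y, addcancel]
    exact ((hex2 y).choose_spec.1).symm
  have hesfsB : es + fs ∈ B := diff_mem E X hy₀ (hesy.symm.trans hfsy)
  have ha0c0B : ∀ y : S, a0 y.1 + c0 y.1 ∈ B := by
    intro y
    have h1 : (es + a0 y.1) + (fs + c0 y.1) ∈ B :=
      diff_mem E X hy₀ ((ha0y y).trans (hc0y y).symm)
    have h2 : ((es + a0 y.1) + (fs + c0 y.1)) + (es + fs) ∈ B := B.add_mem h1 hesfsB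
    rwa [show ((es + a0 y.1) + (fs + c0 y.1)) + (es + fs)
        = (es + es) + ((fs + fs) + (a0 y.1 + c0 y.1)) from by abel,
      addself, addself, zero_add, zero_add] at h2
  have hyB : ∀ y : S, y.1 ∈ XA E X B := fun y => snd_mem_XB E X hy₀ y.2.1
  set W := {w : E × E // w.1 ∈ A ∧ w.2 ∈ C ∧ w.1 + w.2 ∈ B} with hWdef
  have equiv1 : ↥(UABC E A B C) ≃ W := by
    refine ⟨fun t => ⟨(t.1.1, t.1.2.2), t.2.1, t.2.2.2.1,
        by rw [char2_sum E t.2.2.2.2]; exact t.2.2.1⟩,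
      fun w => ⟨(w.1.1, w.1.1 + w.1.2, w.1.2), w.2.1, w.2.2.2, w.2.2.1, ?_⟩, ?_, ?_⟩
    · rw [show w.1.1 + (w.1.1 + w.1.2) + w.1.2 = (w.1.1 + w.1.1) + (w.1.2 + w.1.2) from
        by abel, addself, addself, add_zero]
    · rintro ⟨⟨a, b, c⟩, ha, hb, hc, habc⟩
      apply Subtype.ext
      show (a, a + c, c) = (a, b, c)
      rw [char2_sum E habc]
    · rintro ⟨⟨a, c⟩, ha, hc, hac⟩
      rfl
  have equiv2 : W ≃ S × ↥(A ⊓ B) × ↥(B ⊓ C) := by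
    have toS3 : ∀ w : W, (fs + w.1.2) +ᵥ y₀ = (es + w.1.1) +ᵥ y₀ := by
      rintro ⟨⟨a, c⟩, ha, hc, hac⟩
      apply vadd_eq_of_diff E X hy₀
      have hm := B.add_mem hesfsB hac
      rwa [show (es + fs) + (a + c) = (fs + c) + (es + a) from by abel] at hm
    have toS : ∀ w : W, (x, (es + w.1.1) +ᵥ y₀) ∈ orb2 E X x₀ y₀ ∧
        ((es + w.1.1) +ᵥ y₀, z) ∈ orb2 E X y₀ z₀ := by
      intro w
      constructor
      · refine ⟨es + w.1.1, ?_⟩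
        have hh : (es + w.1.1) +ᵥ x₀ = x := by
          rw [add_vadd, (mem_stab_iff E X hx₀ w.1.1).2 w.2.1, ← hesx]
        rw [← hh]
      · refine ⟨fs + w.1.2, ?_⟩
        have h2 : (fs + w.1.2) +ᵥ z₀ = z := by
          rw [add_vadd, (mem_stab_iff E X hz₀ w.1.2).2 w.2.2.1, ← hfsz]
        rw [← toS3 w, ← h2]
    refine ⟨fun w => ⟨⟨(es + w.1.1) +ᵥ y₀, toS w⟩,
        ⟨w.1.1 + a0 ((es + w.1.1) +ᵥ y₀), ?_⟩,
        ⟨w.1.2 + c0 ((es + w.1.1) +ᵥ y₀), ?_⟩⟩,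
      fun q => ⟨(q.2.1.1 + a0 q.1.1, q.2.2.1 + c0 q.1.1), ?_, ?_, ?_⟩, ?_, ?_⟩
    · -- w.1.1 + a0 _ ∈ A ⊓ B
      refine Submodule.mem_inf.2 ⟨A.add_mem w.2.1 (ha0A ⟨_, toS w⟩), ?_⟩
      have h1 : (es + w.1.1) +ᵥ y₀ = (es + a0 ((es + w.1.1) +ᵥ y₀)) +ᵥ y₀ :=
        (ha0y ⟨_, toS w⟩).symm
      have h2 := diff_mem E X hy₀ h1
      rwa [char2_cancel2] at h2
    · -- w.1.2 + c0 _ ∈ B ⊓ C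
      refine Submodule.mem_inf.2 ⟨?_, C.add_mem w.2.2.1 (hc0C ⟨_, toS w⟩)⟩
      have h1 : (fs + w.1.2) +ᵥ y₀ = (fs + c0 ((es + w.1.1) +ᵥ y₀)) +ᵥ y₀ :=
        (toS3 w).trans (hc0y ⟨_, toS w⟩).symm
      have h2 := diff_mem E X hy₀ h1
      rwa [char2_cancel2] at h2
    · exact A.add_mem (Submodule.mem_inf.1 q.2.1.2).1 (ha0A q.1)
    · exact C.add_mem (Submodule.mem_inf.1 q.2.2.2).2 (hc0C q.1)
    · rw [show (q.2.1.1 + a0 q.1.1) + (q.2.2.1 + c0 q.1.1)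
          = (q.2.1.1 + q.2.2.1) + (a0 q.1.1 + c0 q.1.1) from by abel]
      exact B.add_mem (B.add_mem (Submodule.mem_inf.1 q.2.1.2).2
        (Submodule.mem_inf.1 q.2.2.2).1) (ha0c0B q.1)
    · -- left inverse
      intro w
      apply Subtype.ext
      refine Prod.ext ?_ ?_
      · show (w.1.1 + a0 ((es + w.1.1) +ᵥ y₀)) + a0 ((es + w.1.1) +ᵥ y₀) = w.1.1
        rw [add_assoc, addself, add_zero]
      · show (w.1.2 + c0 ((es + w.1.1) +ᵥ y₀)) + c0 ((es + w.1.1) +ᵥ y₀) = w.1.2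
        rw [add_assoc, addself, add_zero]
    · -- right inverse
      rintro ⟨y, u, v⟩
      have hyy : (es + (u.1 + a0 y.1)) +ᵥ y₀ = y.1 := by
        rw [show es + (u.1 + a0 y.1) = u.1 + (es + a0 y.1) from by abel, add_vadd,
          ha0y y]
        exact (mem_stab_iff E X (hyB y) u.1).2 (Submodule.mem_inf.1 u.2).2
      refine Prod.ext (Subtype.ext hyy) (Prod.ext ?_ ?_)
      · apply Subtype.ext
        show (u.1 + a0 y.1) + a0 ((es + (u.1 + a0 y.1)) +ᵥ y₀) = u.1
        rw [hyy, add_assoc, addself, add_zero]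
      · apply Subtype.ext
        show (v.1 + c0 y.1) + c0 ((es + (u.1 + a0 y.1)) +ᵥ y₀) = v.1
        rw [hyy, add_assoc, addself, add_zero]
  have hcards := Nat.card_congr (equiv1.trans equiv2)
  rw [Nat.card_prod, Nat.card_prod] at hcards
  rw [hcards]

set_option maxHeartbeats 1000000 in
/-- `[𝒪]^{ε₁} ⋆ [𝒪']^{ε'₁} = N_{A,B,C} · ∑_ε [𝒪 • 𝒪']^ε`, the sum over
the `ε ∈ (A∩C)*` whose restriction to `A∩B∩C` added to those of `ε₁, ε'₁` is zero. -/
theorem statement10 (A B C : Submodule (ZMod 2) E) (O O' : Set (X × X))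
    (hO : IsOrb2 E X A B O) (hO' : IsOrb2 E X B C O')
    (h : p2 X O = p1 X O') (ε₁ : Dl E (A ⊓ B)) (ε'₁ : Dl E (B ⊓ C)) :
    conv E X A B C (br E X A B O ε₁) (br E X B C O' ε'₁) =
      ((Nat.card ↥(UABC E A B C) : ℂ) * (Nat.card ↥(A ⊓ B ⊓ C) : ℂ)
          / ((Nat.card ↥(A ⊓ B) : ℂ) * (Nat.card ↥(B ⊓ C) : ℂ) * (Nat.card ↥(A ⊓ C) : ℂ))) •
        ∑ᶠ (ε : Dl E (A ⊓ C))
          (_ : res E (leAC E A B C) ε + res E (leAB E A B C) ε₁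
                + res E (leBC E A B C) ε'₁ = 0),
          br E X A C (bullet X O O') ε := by
  classical
  obtain ⟨x₀, y₀, hx₀, hy₀, rfl⟩ := hO
  obtain ⟨y₁, z₁, hy₁, hz₁, rfl⟩ := hO'
  -- normalize the second orbit so that its base point is y₀
  have hy₁mem : y₁ ∈ p1 X (orb2 E X y₁ z₁) :=
    ⟨(y₁, z₁), ⟨0, by rw [zero_vadd, zero_vadd]⟩, rfl⟩
  rw [← h] at hy₁mem
  obtain ⟨q, ⟨e₀, hq⟩, hq2⟩ := hy₁mem
  have hy₁eq : y₁ = e₀ +ᵥ y₀ := by rw [← hq2, hq]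
  have hz₀C : e₀ +ᵥ z₁ ∈ XA E X C := XA_vadd E X e₀ hz₁
  have horb : orb2 E X y₁ z₁ = orb2 E X y₀ (e₀ +ᵥ z₁) := by
    have h2 := orb2_vadd E X e₀ y₀ (e₀ +ᵥ z₁)
    rw [two_vadd] at h2
    rw [hy₁eq, ← h2]
  rw [horb]
  set z₀ : X := e₀ +ᵥ z₁ with hz₀def
  clear hz₁ hy₁eq horb hq hq2 h hy₁
  -- pointwise computation
  funext p
  obtain ⟨⟨x, z⟩, ε⟩ := p
  haveI : Fintype (Dl E (A ⊓ B)) := Fintype.ofFinite _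
  haveI : Fintype (Dl E (B ⊓ C)) := Fintype.ofFinite _
  haveI : Fintype (Dl E (A ⊓ C)) := Fintype.ofFinite _
  set cond : Prop := (res E (leAB E A B C) ε₁ + res E (leBC E A B C) ε'₁
      + res E (leAC E A B C) ε = 0) with hconddef
  -- step 1 : collapse the two inner finsums
  have step1 : ∀ y : X,
      (∑ᶠ (ε₁' : Dl E (A ⊓ B)) (ε₂' : Dl E (B ⊓ C))
        (_ : res E (leAB E A B C) ε₁' + res E (leBC E A B C) ε₂'
              + res E (leAC E A B C) ε = 0),
        br E X A B (orb2 E X x₀ y₀) ε₁ ((x, y), ε₁') *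
          br E X B C (orb2 E X y₀ z₀) ε'₁ ((y, z), ε₂')) =
      if cond ∧ (x, y) ∈ orb2 E X x₀ y₀ ∧ (y, z) ∈ orb2 E X y₀ z₀ then 1 else 0 := by
    intro y
    have h1 : ∀ b : Dl E (A ⊓ B), b ≠ ε₁ →
        (∑ᶠ (ε₂' : Dl E (B ⊓ C)) (_ : res E (leAB E A B C) b + res E (leBC E A B C) ε₂'
              + res E (leAC E A B C) ε = 0),
          br E X A B (orb2 E X x₀ y₀) ε₁ ((x, y), b) *
            br E X B C (orb2 E X y₀ z₀) ε'₁ ((y, z), ε₂')) = 0 := by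
      intro b hb
      refine finsum_eq_zero_of_forall_eq_zero fun ε₂' => ?_
      rw [finsum_eq_if]
      simp [br, hb]
    rw [finsum_eq_single _ ε₁ h1]
    have h2 : ∀ b : Dl E (B ⊓ C), b ≠ ε'₁ →
        (∑ᶠ (_ : res E (leAB E A B C) ε₁ + res E (leBC E A B C) b
              + res E (leAC E A B C) ε = 0),
          br E X A B (orb2 E X x₀ y₀) ε₁ ((x, y), ε₁) *
            br E X B C (orb2 E X y₀ z₀) ε'₁ ((y, z), b)) = 0 := by
      intro b hb
      rw [finsum_eq_if]
      simp [br, hb]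
    rw [finsum_eq_single _ ε'₁ h2]
    rw [finsum_eq_if]
    by_cases hc : cond
    · rw [if_pos hc]
      by_cases hm1 : (x, y) ∈ orb2 E X x₀ y₀ <;>
        by_cases hm2 : (y, z) ∈ orb2 E X y₀ z₀
      · rw [if_pos ⟨hc, hm1, hm2⟩]
        simp [br, hm1, hm2]
      · rw [if_neg (fun hh => hm2 hh.2.2)]
        simp [br, hm2]
      · rw [if_neg (fun hh => hm1 hh.2.1)]
        simp [br, hm1]
      · rw [if_neg (fun hh => hm1 hh.2.1)]
        simp [br, hm1]
    · rw [if_neg hc, if_neg (fun hh => hc hh.1)]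
  -- step 2 : the y-sum
  have hsum : (∑ᶠ (y : X) (_ : y ∈ XA E X B) (ε₁' : Dl E (A ⊓ B)) (ε₂' : Dl E (B ⊓ C))
      (_ : res E (leAB E A B C) ε₁' + res E (leBC E A B C) ε₂'
            + res E (leAC E A B C) ε = 0),
      br E X A B (orb2 E X x₀ y₀) ε₁ ((x, y), ε₁') *
        br E X B C (orb2 E X y₀ z₀) ε'₁ ((y, z), ε₂')) =
      if cond then
        ((Nat.card {y : X // (x, y) ∈ orb2 E X x₀ y₀ ∧ (y, z) ∈ orb2 E X y₀ z₀} : ℕ) : ℂ)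
      else 0 := by
    rw [finsum_congr (fun y => finsum_congr (fun _ => step1 y))]
    have e2 : ∀ y : X,
        (∑ᶠ (_ : y ∈ XA E X B),
          if cond ∧ (x, y) ∈ orb2 E X x₀ y₀ ∧ (y, z) ∈ orb2 E X y₀ z₀ then (1:ℂ) else 0) =
        if cond then
          (if (x, y) ∈ orb2 E X x₀ y₀ ∧ (y, z) ∈ orb2 E X y₀ z₀ then (1:ℂ) else 0)
        else 0 := by
      intro y
      rw [finsum_eq_if]
      by_cases hm : ((x, y) ∈ orb2 E X x₀ y₀ ∧ (y, z) ∈ orb2 E X y₀ z₀)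
      · have hy : y ∈ XA E X B := snd_mem_XB E X hy₀ hm.1
        simp [hy, hm.1, hm.2]
      · simp [hm]
    rw [finsum_congr e2]
    by_cases hc : cond
    · simp only [if_pos hc]
      rw [finsum_eq_sum_of_fintype, Finset.sum_boole, Nat.card_eq_fintype_card,
        Fintype.card_subtype]
    · simp [hc]
  -- right-hand side evaluation
  have hcc : cond ↔ (res E (leAC E A B C) ε + res E (leAB E A B C) ε₁
      + res E (leBC E A B C) ε'₁ = 0) := by
    rw [hconddef, show res E (leAB E A B C) ε₁ + res E (leBC E A B C) ε'₁
        + res E (leAC E A B C) ε = res E (leAC E A B C) ε + res E (leAB E A B C) ε₁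
        + res E (leBC E A B C) ε'₁ from by abel]
  have hR : (∑ᶠ (ε' : Dl E (A ⊓ C))
      (_ : res E (leAC E A B C) ε' + res E (leAB E A B C) ε₁
            + res E (leBC E A B C) ε'₁ = 0),
      br E X A C (bullet X (orb2 E X x₀ y₀) (orb2 E X y₀ z₀)) ε') ((x, z), ε) =
      if cond ∧ (x, z) ∈ bullet X (orb2 E X x₀ y₀) (orb2 E X y₀ z₀) then 1 else 0 := by
    rw [finsum_eq_sum_of_fintype, Finset.sum_apply]
    have hterm : ∀ ε' : Dl E (A ⊓ C),
        ((∑ᶠ (_ : res E (leAC E A B C) ε' + res E (leAB E A B C) ε₁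
            + res E (leBC E A B C) ε'₁ = 0),
          br E X A C (bullet X (orb2 E X x₀ y₀) (orb2 E X y₀ z₀)) ε') ((x, z), ε)) =
        if (res E (leAC E A B C) ε' + res E (leAB E A B C) ε₁
              + res E (leBC E A B C) ε'₁ = 0)
            ∧ (x, z) ∈ bullet X (orb2 E X x₀ y₀) (orb2 E X y₀ z₀) ∧ ε = ε'
          then (1:ℂ) else 0 := by
      intro ε'
      rw [finsum_eq_if]
      by_cases hc : (res E (leAC E A B C) ε' + res E (leAB E A B C) ε₁
          + res E (leBC E A B C) ε'₁ = 0)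
      · rw [if_pos hc]
        show (if (x, z) ∈ bullet X (orb2 E X x₀ y₀) (orb2 E X y₀ z₀) ∧ ε = ε'
            then (1:ℂ) else 0) = _
        by_cases hm : ((x, z) ∈ bullet X (orb2 E X x₀ y₀) (orb2 E X y₀ z₀) ∧ ε = ε')
        · rw [if_pos hm, if_pos ⟨hc, hm.1, hm.2⟩]
        · rw [if_neg hm, if_neg (fun hh => hm ⟨hh.2.1, hh.2.2⟩)]
      · rw [if_neg hc, if_neg (fun hh => hc hh.1)]
        rfl
    rw [Finset.sum_congr rfl (fun ε' _ => hterm ε')]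
    rw [Finset.sum_eq_single ε (fun b _ hb => by
        rw [if_neg (fun hh => hb hh.2.2.symm)])
      (fun hε => absurd (Finset.mem_univ ε) hε)]
    by_cases hc2 : (res E (leAC E A B C) ε + res E (leAB E A B C) ε₁
        + res E (leBC E A B C) ε'₁ = 0)
    · have hc : cond := hcc.2 hc2
      by_cases hb : (x, z) ∈ bullet X (orb2 E X x₀ y₀) (orb2 E X y₀ z₀)
      · rw [if_pos ⟨hc2, hb, rfl⟩, if_pos ⟨hc, hb⟩]
      · rw [if_neg (fun hh => hb hh.2.1), if_neg (fun hh => hb hh.2)]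
    · have hc : ¬ cond := fun hh => hc2 (hcc.1 hh)
      rw [if_neg (fun hh => hc2 hh.1), if_neg (fun hh => hc hh.1)]
  -- put things together
  show conv E X A B C (br E X A B (orb2 E X x₀ y₀) ε₁)
      (br E X B C (orb2 E X y₀ z₀) ε'₁) ((x, z), ε) = _
  rw [Pi.smul_apply, smul_eq_mul, hR]
  dsimp only [conv]
  rw [hsum]
  -- final arithmetic
  have hAB0 : (Nat.card ↥(A ⊓ B) : ℂ) ≠ 0 := by
    exact_mod_cast Nat.card_pos.ne'
  have hBC0 : (Nat.card ↥(B ⊓ C) : ℂ) ≠ 0 := by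
    exact_mod_cast Nat.card_pos.ne'
  have hAC0 : (Nat.card ↥(A ⊓ C) : ℂ) ≠ 0 := by
    exact_mod_cast Nat.card_pos.ne'
  by_cases hc : cond
  · by_cases hb : (x, z) ∈ bullet X (orb2 E X x₀ y₀) (orb2 E X y₀ z₀)
    · rw [if_pos hc, if_pos ⟨hc, hb⟩]
      have hcount := count_key E X A B C x₀ y₀ z₀ hx₀ hy₀ hz₀C x z hb
      have hcount' : ((Nat.card {y : X // (x, y) ∈ orb2 E X x₀ y₀ ∧
          (y, z) ∈ orb2 E X y₀ z₀} : ℕ) : ℂ) * ((Nat.card ↥(A ⊓ B) : ℕ) : ℂ)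
          * ((Nat.card ↥(B ⊓ C) : ℕ) : ℂ) = ((Nat.card ↥(UABC E A B C) : ℕ) : ℂ) := by
        rw [mul_assoc]
        exact_mod_cast hcount
      rw [mul_one, ← hcount',
        div_eq_div_iff hAC0 (mul_ne_zero (mul_ne_zero hAB0 hBC0) hAC0)]
      ring
    · rw [if_pos hc, if_neg (fun hh => hb hh.2)]
      haveI : IsEmpty {y : X // (x, y) ∈ orb2 E X x₀ y₀ ∧ (y, z) ∈ orb2 E X y₀ z₀} :=
        ⟨fun y => hb ⟨y.1, y.2.1, y.2.2⟩⟩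
      rw [Nat.card_of_isEmpty]
      simp
  · rw [if_neg hc, if_neg (fun hh => hc hh.1)]
    simp

end Lusztig
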